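/- arXiv:2003.13116 — 2 statements merged into one kernel-verified Lean document; each statement's English description precedes it below -/
import Mathlib

section
/- If x ∈ ℝ³ satisfies √2 − 1 ≤ ‖x‖ ≤ √2 + 1 and z ∈ ℂ satisfies |z| < √2 − 1, then 1 + 2x₁ z + ‖x‖² z² ≠ 0. -/
/-!
With `w = x₁ + i √(x₂² + x₃²)` the polynomial factors as `Q(z) = (1 + w z)(1 + w̄ z)`, where
`|w| = ‖x‖`. A zero of `Q` therefore has `|z| = 1 / ‖x‖ ≥ 1 / (√2 + 1) = √2 - 1`.
-/

open Complex ComplexConjugate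

theorem one_add_mul_mul_one_add_conj_mul (w z : ℂ) :
    (1 + w * z) * (1 + conj w * z) = 1 + 2 * (w.re : ℂ) * z + (normSq w : ℂ) * z ^ 2 := by
  rw [normSq_eq_conj_mul_self, re_eq_add_conj]
  ring

theorem norm_mul_norm_eq_one_of_quadratic_eq_zero {w z : ℂ}
    (h : 1 + 2 * (w.re : ℂ) * z + (normSq w : ℂ) * z ^ 2 = 0) : ‖w‖ * ‖z‖ = 1 := by
  rw [← one_add_mul_mul_one_add_conj_mul, mul_eq_zero] at h
  rcases h with h | h
  · rw [← norm_mul, eq_neg_of_add_eq_zero_right h, norm_neg, norm_one]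
  · rw [← norm_conj w, ← norm_mul, eq_neg_of_add_eq_zero_right h, norm_neg, norm_one]

theorem Q_nonzero_on_disk_general (x₁ x₂ x₃ : ℝ)
    (h₂ : Real.sqrt (x₁^2 + x₂^2 + x₃^2) ≤ Real.sqrt 2 + 1)
    (z : ℂ) (hz : ‖z‖ < Real.sqrt 2 - 1) :
    1 + 2 * (x₁ : ℂ) * z + ((x₁^2 + x₂^2 + x₃^2 : ℝ) : ℂ) * z^2 ≠ 0 := by
  intro hQ
  set w : ℂ := ⟨x₁, Real.sqrt (x₂^2 + x₃^2)⟩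
  have hw_normSq : normSq w = x₁^2 + x₂^2 + x₃^2 := by
    rw [normSq_mk, ← sq, ← sq, Real.sq_sqrt (by positivity)]
    ring
  have hw_norm : ‖w‖ = Real.sqrt (x₁^2 + x₂^2 + x₃^2) := by
    rw [norm_def, hw_normSq]
  have hwz : ‖w‖ * ‖z‖ = 1 :=
    norm_mul_norm_eq_one_of_quadratic_eq_zero (by rwa [hw_normSq])
  have hsqrt2 : Real.sqrt 2 ^ 2 = 2 := Real.sq_sqrt zero_le_two
  have hlt : ‖w‖ * ‖z‖ < (Real.sqrt 2 + 1) * (Real.sqrt 2 - 1) := by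
    calc ‖w‖ * ‖z‖ ≤ (Real.sqrt 2 + 1) * ‖z‖ := by rw [hw_norm]; gcongr
      _ < _ := by gcongr
  nlinarith [hwz, hlt, hsqrt2]

theorem Q_nonzero_on_disk (x₁ x₂ x₃ : ℝ)
    (h₁ : Real.sqrt 2 - 1 ≤ Real.sqrt (x₁^2 + x₂^2 + x₃^2))
    (h₂ : Real.sqrt (x₁^2 + x₂^2 + x₃^2) ≤ Real.sqrt 2 + 1)
    (z : ℂ) (hz : ‖z‖ < Real.sqrt 2 - 1) :
    1 + 2 * (x₁ : ℂ) * z + ((x₁^2 + x₂^2 + x₃^2 : ℝ) : ℂ) * z^2 ≠ 0 :=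
  Q_nonzero_on_disk_general x₁ x₂ x₃ h₂ z hz
end

section
/- The inversion i(x) = x/‖x‖² on ℝ³ \ {0} maps the torus T_{√2} (major radius √2, minor radius 1) onto itself as a point set. -/
/-! The torus of radii `R ≥ r ≥ 0` is the level set `(ρ - R)² + z² = r²`, where `ρ` is the
distance to the `z`-axis; equivalently `‖p‖² + R² - r² = 2Rρ`. Inversion sends `‖p‖²` to
`‖p‖⁻²` and `ρ` to `ρ / ‖p‖²`, so when `R² - r² = 1` the equation for the image point is the
original one divided by `‖p‖²`. Since inversion is an involution, it maps such a torus onto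
itself. -/

open Real Set

namespace TorusInversion

noncomputable def sqNorm (p : ℝ × ℝ × ℝ) : ℝ := p.1 ^ 2 + p.2.1 ^ 2 + p.2.2 ^ 2

noncomputable def axialDist (p : ℝ × ℝ × ℝ) : ℝ := √(p.1 ^ 2 + p.2.1 ^ 2)

noncomputable def inversion (p : ℝ × ℝ × ℝ) : ℝ × ℝ × ℝ :=
  (p.1 / sqNorm p, p.2.1 / sqNorm p, p.2.2 / sqNorm p)

def torus (R r : ℝ) : Set (ℝ × ℝ × ℝ) :=
  {p | ∃ u v : ℝ, p = ((R + r * cos v) * cos u, (R + r * cos v) * sin u, r * sin v)}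

lemma exists_polar (a b : ℝ) :
    ∃ θ : ℝ, a = √(a ^ 2 + b ^ 2) * cos θ ∧ b = √(a ^ 2 + b ^ 2) * sin θ := by
  have hnorm : ‖(⟨a, b⟩ : ℂ)‖ = √(a ^ 2 + b ^ 2) := by
    rw [Complex.norm_def, Complex.normSq_mk, sq, sq]
  refine ⟨Complex.arg ⟨a, b⟩, ?_, ?_⟩
  · rw [← hnorm, Complex.norm_mul_cos_arg]
  · rw [← hnorm, Complex.norm_mul_sin_arg]

lemma sqNorm_nonneg (p : ℝ × ℝ × ℝ) : 0 ≤ sqNorm p := by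
  unfold sqNorm; positivity

lemma axialDist_sq (p : ℝ × ℝ × ℝ) : axialDist p ^ 2 = p.1 ^ 2 + p.2.1 ^ 2 :=
  sq_sqrt (by positivity)

lemma eq_zero_of_sqNorm_eq_zero {p : ℝ × ℝ × ℝ} (h : sqNorm p = 0) : p = 0 := by
  unfold sqNorm at h
  have h1 : p.1 = 0 := by nlinarith [sq_nonneg p.1, sq_nonneg p.2.1, sq_nonneg p.2.2]
  have h2 : p.2.1 = 0 := by nlinarith [sq_nonneg p.1, sq_nonneg p.2.1, sq_nonneg p.2.2]
  have h3 : p.2.2 = 0 := by nlinarith [sq_nonneg p.1, sq_nonneg p.2.1, sq_nonneg p.2.2]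
  exact Prod.ext h1 (Prod.ext h2 h3)

lemma sqNorm_inversion (p : ℝ × ℝ × ℝ) : sqNorm (inversion p) = (sqNorm p)⁻¹ := by
  rw [sqNorm, inversion]
  simp only [div_pow, ← add_div]
  rw [← sqNorm, sq (sqNorm p), div_self_mul_self']

lemma axialDist_inversion (p : ℝ × ℝ × ℝ) : axialDist (inversion p) = axialDist p / sqNorm p := by
  simp only [axialDist, inversion, div_pow, ← add_div]
  rw [sqrt_div' _ (sq_nonneg _), sqrt_sq (sqNorm_nonneg p)]

-- Since `x / 0 = 0`, `inversion 0 = 0`, so this holds on all of `ℝ³`, not only off the origin.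
lemma inversion_involutive : Function.Involutive inversion := by
  intro p
  rcases eq_or_ne (sqNorm p) 0 with h | h
  · obtain rfl := eq_zero_of_sqNorm_eq_zero h
    simp [inversion, sqNorm]
  · have hinv := sqNorm_inversion p
    simp only [inversion] at hinv ⊢
    rw [hinv]
    ext <;> field_simp

lemma mem_torus_iff {R r : ℝ} (hr : 0 ≤ r) (hrR : r ≤ R) {p : ℝ × ℝ × ℝ} :
    p ∈ torus R r ↔ (axialDist p - R) ^ 2 + p.2.2 ^ 2 = r ^ 2 := by
  constructor
  · rintro ⟨u, v, rfl⟩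
    have hρ : axialDist ((R + r * cos v) * cos u, (R + r * cos v) * sin u, r * sin v)
        = R + r * cos v := by
      have hcos : -r ≤ r * cos v := by nlinarith [neg_one_le_cos v]
      rw [axialDist, mul_pow, mul_pow, ← mul_add, cos_sq_add_sin_sq, mul_one,
        sqrt_sq (by linarith)]
    rw [hρ]
    linear_combination r ^ 2 * sin_sq_add_cos_sq v
  · intro h
    obtain ⟨v, hv₁, hv₂⟩ := exists_polar (axialDist p - R) p.2.2
    rw [h, sqrt_sq hr] at hv₁ hv₂
    obtain ⟨u, hu₁, hu₂⟩ := exists_polar p.1 p.2.1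
    rw [← axialDist, show axialDist p = R + r * cos v by linarith] at hu₁ hu₂
    exact ⟨u, v, Prod.ext hu₁ (Prod.ext hu₂ hv₂)⟩

lemma mapsTo_inversion_torus {R r : ℝ} (hr : 0 ≤ r) (hrR : r ≤ R) (hRr : R ^ 2 - r ^ 2 = 1) :
    MapsTo inversion (torus R r) (torus R r) := by
  have key : ∀ q, q ∈ torus R r ↔ sqNorm q + 1 = 2 * R * axialDist q := fun q => by
    rw [mem_torus_iff hr hrR, sqNorm]
    constructor <;> intro h
    · linear_combination h - axialDist_sq q - hRr
    · linear_combination h + axialDist_sq q + hRr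
  intro p hp
  rw [key] at hp ⊢
  have hN : sqNorm p ≠ 0 := by
    intro h0
    simp [eq_zero_of_sqNorm_eq_zero h0, sqNorm, axialDist] at hp
  rw [sqNorm_inversion, axialDist_inversion]
  field_simp
  linear_combination hp

end TorusInversion

lemma Function.Involutive.image_eq_of_mapsTo {α : Type*} {f : α → α} {s : Set α}
    (hf : Function.Involutive f) (hs : MapsTo f s s) : f '' s = s :=
  (hs.image_subset).antisymm fun p hp => ⟨f p, hs hp, hf p⟩

open TorusInversion in
theorem inversion_maps_clifford_torus_to_itself :
    (fun p : ℝ × ℝ × ℝ =>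
        (p.1 / (p.1^2 + p.2.1^2 + p.2.2^2),
         p.2.1 / (p.1^2 + p.2.1^2 + p.2.2^2),
         p.2.2 / (p.1^2 + p.2.1^2 + p.2.2^2))) ''
      {p : ℝ × ℝ × ℝ | ∃ u v : ℝ,
        p = ((Real.sqrt 2 + Real.cos v) * Real.cos u,
             (Real.sqrt 2 + Real.cos v) * Real.sin u,
             Real.sin v)} =
    {p : ℝ × ℝ × ℝ | ∃ u v : ℝ,
        p = ((Real.sqrt 2 + Real.cos v) * Real.cos u,
             (Real.sqrt 2 + Real.cos v) * Real.sin u,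
             Real.sin v)} := by
  have hT : {p : ℝ × ℝ × ℝ | ∃ u v : ℝ, p = ((√2 + cos v) * cos u, (√2 + cos v) * sin u, sin v)}
      = torus √2 1 := by
    simp only [torus, one_mul]
  have hR : (1 : ℝ) ≤ √2 := one_le_sqrt.mpr one_le_two
  have hRr : √2 ^ 2 - 1 ^ 2 = 1 := by norm_num
  change inversion '' _ = _
  rw [hT]
  exact inversion_involutive.image_eq_of_mapsTo (mapsTo_inversion_torus zero_le_one hR hRr)
end
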